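/- arXiv:2212.14410 — 2 statements merged into one kernel-verified Lean document; each statement's English description precedes it below -/
import Mathlib

section
/- Let G be an (m+1)×m matrix over F_q whose full set of row indices is a circuit, and define B(i,j) = { v ∈ F_q^m : (row i of G)·v = j }. Fix i ∈ {1,…,m} and values l_1,…,l_{i-1},l_{i+1},…,l_m ∈ F_q, and let E = B(1,l_1) ∩ ⋯ ∩ B(i-1,l_{i-1}) ∩ B(i+1,l_{i+1}) ∩ ⋯ ∩ B(m,l_m) (a set of size q). Then the q elements of E lie in q distinct blocks of the parallel class { B(m+1, j) : j ∈ F_q }, i.e. the map sending v ∈ E to (row m+1 of G)·v is injective. -/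
/-! Two points of `E` with the same value of row `m + 1` differ by a vector orthogonal to
every row except row `i`; by the circuit property those `m` rows span `F^m`,
so the vector is `0`. -/

open Matrix Submodule

theorem Matrix.eq_of_dotProduct_eq_of_span_eq_top {K n ι : Type*} [CommSemiring K] [Fintype n]
    {b : ι → n → K} (hb : span K (Set.range b) = ⊤) {v w : n → K}
    (h : ∀ j, b j ⬝ᵥ v = b j ⬝ᵥ w) : v = w := by
  have hflip : (dotProductBilin K K).flip v = (dotProductBilin K K).flip w :=
    LinearMap.ext_on_range hb h
  refine dotProduct_eq v w fun u => ?_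
  simpa only [LinearMap.flip_apply, dotProductBilin_apply_apply, dotProduct_comm u] using
    LinearMap.congr_fun hflip u

theorem Matrix.span_rows_ne_eq_top {K n ι : Type*} [Field K] [Fintype n] [Fintype ι]
    [DecidableEq ι] (G : Matrix ι n K) (hcard : Fintype.card ι = Fintype.card n + 1) (r : ι)
    (hind : LinearIndependent K fun k : {x // x ≠ r} => G k) :
    span K (Set.range fun k : {x // x ≠ r} => G k) = ⊤ :=
  hind.span_eq_top_of_card_eq_finrank' <| by
    rw [Fintype.card_subtype_compl, Fintype.card_subtype_eq, hcard,
      Module.finrank_fintype_fun_eq_card, Nat.add_sub_cancel]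

theorem stmt_12_general (F : Type*) [Field F] (m : ℕ)
    (G : Matrix (Fin (m + 1)) (Fin m) F)
    (hind : ∀ i : Fin (m + 1),
      LinearIndependent F (fun k : {x : Fin (m + 1) // x ≠ i} => G k))
    (i : Fin m) (l : Fin m → F) :
    Set.InjOn (fun v : Fin m → F => dotProduct (G (Fin.last m)) v)
      {v : Fin m → F |
        ∀ k : Fin m, k ≠ i → dotProduct (G k.castSucc) v = l k} := by
  intro v hv w hw hvw
  refine eq_of_dotProduct_eq_of_span_eq_top
    (G.span_rows_ne_eq_top (by simp) i.castSucc (hind _)) ?_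
  rintro ⟨j, hj⟩
  induction j using Fin.lastCases with
  | last => exact hvw
  | cast k =>
    have hk : k ≠ i := fun h => hj (congrArg Fin.castSucc h)
    exact (hv k hk).trans (hw k hk).symm

/-- Let G be an (m+1)×m matrix over F_q whose full row-index set is a circuit
(rows dependent, every m rows independent). Fix i ∈ {1,…,m} and values
l_k ∈ F_q for k ≠ i, and let E be the intersection of the blocks
`B(k, l_k)` for k ≠ i, k ≤ m. Then the elements of E lie in distinct blocks of
the parallel class of row m+1: the map `v ↦ (row m+1 of G)·v` is injective
on E. -/
theorem stmt_12 (F : Type*) [Field F] [Fintype F] (m : ℕ)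
    (G : Matrix (Fin (m + 1)) (Fin m) F)
    (hdep : ¬ LinearIndependent F G)
    (hind : ∀ i : Fin (m + 1),
      LinearIndependent F (fun k : {x : Fin (m + 1) // x ≠ i} => G k))
    (i : Fin m) (l : Fin m → F) :
    Set.InjOn (fun v : Fin m → F => dotProduct (G (Fin.last m)) v)
      {v : Fin m → F |
        ∀ k : Fin m, k ≠ i → dotProduct (G k.castSucc) v = l k} :=
  stmt_12_general F m G hind i l
end

section
/- Let G be an n×m matrix over F_q (n = m+s for some s ≥ 1) constructed as follows: rows 1,…,m are linearly independent, and each additional row is either equal to one of the first m rows or equal to the sum of the first m rows. If at least one additional row equals the sum of the first m rows, then every row index in {1,…,n} belongs to at least one (m+1)-element circuit of G. -/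
/-!
If `B` indexes independent rows and the row `e` is the sum of the rows of `B`, then `insert e B`
is a circuit: removing `e` leaves `B`, and removing any `b ∈ B` leaves a set in which `g b` would
be needed to express `g e`. The first `m` rows together with a summed row give such a circuit
through every original row and every summed row; a row repeating the original row `j` can be
exchanged for `j` in `B` without changing independence or the sum, which gives a circuit
through it as well.
-/

open Finset Submodule

def IsCircuit (F : Type*) {V κ : Type*} [Field F] [AddCommGroup V] [Module F V] (g : κ → V)
    (C : Finset κ) : Prop :=
  ¬ LinearIndependent F (fun i : C => g i) ∧ ∀ C' ⊂ C, LinearIndependent F (fun i : C' => g i)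

section

variable {F V κ : Type*} [Field F] [AddCommGroup V] [Module F V] [DecidableEq κ]

theorem LinearIndepOn.notMem_span_erase {g : κ → V} {B : Finset κ} (hB : LinearIndepOn F g ↑B)
    {b : κ} (hb : b ∈ B) : g b ∉ span F (g '' ↑(B.erase b)) := by
  rw [← insert_erase hb, coe_insert, linearIndepOn_insert (by simp)] at hB
  exact hB.2

theorem LinearIndepOn.insert_erase_of_eq {g : κ → V} {B : Finset κ} (hB : LinearIndepOn F g ↑B)
    {b r : κ} (hb : b ∈ B) (hr : r ∉ B) (hgr : g r = g b) :
    LinearIndepOn F g ↑(insert r (B.erase b)) := by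
  rw [coe_insert, linearIndepOn_insert (fun h => hr (mem_of_mem_erase h)), hgr]
  exact ⟨hB.mono (by simp), hB.notMem_span_erase hb⟩

theorem Finset.sum_insert_erase_of_eq {M : Type*} [AddCommMonoid M] {g : κ → M} {B : Finset κ}
    {b r : κ} (hb : b ∈ B) (hr : r ∉ B) (hgr : g r = g b) :
    ∑ i ∈ insert r (B.erase b), g i = ∑ i ∈ B, g i := by
  rw [sum_insert (fun h => hr (mem_of_mem_erase h)), hgr, add_sum_erase _ _ hb]

theorem isCircuit_insert_of_eq_sum {g : κ → V} {B : Finset κ} (hB : LinearIndepOn F g ↑B)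
    {e : κ} (he : e ∉ B) (hsum : g e = ∑ i ∈ B, g i) : IsCircuit F g (insert e B) := by
  have hspan : g e ∈ span F (g '' ↑B) :=
    hsum ▸ sum_mem fun i hi => subset_span ⟨i, hi, rfl⟩
  refine ⟨fun h => ?_, fun C' hC' => ?_⟩
  · have : LinearIndepOn F g ↑(insert e B) := h
    rw [coe_insert, linearIndepOn_insert he] at this
    exact this.2 hspan
  obtain ⟨a, haC, haC'⟩ := exists_of_ssubset hC'
  suffices LinearIndepOn F g ↑((insert e B).erase a) from
    this.mono fun x hx => mem_erase.2 ⟨fun h => haC' (h ▸ hx), hC'.1 hx⟩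
  rcases mem_insert.1 haC with rfl | haB
  · rwa [erase_insert he]
  have hae : a ≠ e := fun h => he (h ▸ haB)
  rw [erase_insert_of_ne hae.symm, coe_insert,
    linearIndepOn_insert fun h => he (mem_of_mem_erase h)]
  refine ⟨hB.mono (by simp), fun h => hB.notMem_span_erase haB ?_⟩
  -- `g a` is `g e` minus the sum of the other vectors of `B`
  rw [← add_sum_erase _ _ haB] at hsum
  rw [eq_sub_of_add_eq hsum.symm]
  exact sub_mem h (sum_mem fun i hi => subset_span ⟨i, hi, rfl⟩)

theorem exists_circuit_of_eq_sum {g : κ → V} {B : Finset κ} (hB : LinearIndepOn F g ↑B)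
    {e : κ} (he : e ∉ B) (hsum : g e = ∑ i ∈ B, g i) {r : κ} (hr : r ∈ insert e B) :
    ∃ C : Finset κ, r ∈ C ∧ C.card = B.card + 1 ∧ IsCircuit F g C :=
  ⟨insert e B, hr, card_insert_of_notMem he, isCircuit_insert_of_eq_sum hB he hsum⟩

end

theorem stmt_15_general (F : Type*) [Field F] (m s : ℕ)
    (G : Matrix (Fin (m + s)) (Fin m) F)
    (hindep : LinearIndependent F (fun i : Fin m => G (Fin.castAdd s i)))
    (hextra : ∀ i : Fin s,
      (∃ j : Fin m, G (Fin.natAdd m i) = G (Fin.castAdd s j)) ∨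
      G (Fin.natAdd m i) = ∑ j : Fin m, G (Fin.castAdd s j))
    (hsum : ∃ i : Fin s,
      G (Fin.natAdd m i) = ∑ j : Fin m, G (Fin.castAdd s j)) :
    ∀ r : Fin (m + s), ∃ C : Finset (Fin (m + s)),
      r ∈ C ∧ C.card = m + 1 ∧
      ¬ LinearIndependent F (fun i : C => G i) ∧
      ∀ C' : Finset (Fin (m + s)), C' ⊂ C →
        LinearIndependent F (fun i : C' => G i) := by
  set B : Finset (Fin (m + s)) := univ.map (Fin.castAddEmb s)
  have hBcard : B.card = m := by simp [B]
  have hB : LinearIndepOn F G ↑B := by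
    simpa [B] using (linearIndepOn_range_iff (Fin.castAdd_injective m s) G).2 hindep
  have hsumB : ∑ i ∈ B, G i = ∑ j, G (Fin.castAdd s j) := sum_map _ _ _
  have hnotB : ∀ i : Fin s, Fin.natAdd m i ∉ B := by simp [B, Fin.ext_iff]; omega
  intro r
  suffices ∃ C, r ∈ C ∧ C.card = B.card + 1 ∧ IsCircuit F G C by
    obtain ⟨C, hrC, hcard, hcirc⟩ := this
    exact ⟨C, hrC, by rw [hcard, hBcard], hcirc⟩
  obtain ⟨i₀, hi₀⟩ := hsum
  refine Fin.addCases (fun k => ?_) (fun i => ?_) r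
  · exact exists_circuit_of_eq_sum hB (hnotB i₀) (hsumB ▸ hi₀)
      (mem_insert_of_mem (mem_map_of_mem _ (mem_univ k)))
  by_cases hi : G (Fin.natAdd m i) = ∑ j, G (Fin.castAdd s j)
  · exact exists_circuit_of_eq_sum hB (hnotB i) (hsumB ▸ hi) (mem_insert_self _ _)
  obtain ⟨j, hj⟩ := (hextra i).resolve_right hi
  have hjB : Fin.castAdd s j ∈ B := mem_map_of_mem _ (mem_univ j)
  have hi₀i : Fin.natAdd m i₀ ≠ Fin.natAdd m i := fun h => hi (h ▸ hi₀)
  obtain ⟨C, hrC, hcard, hcirc⟩ :=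
    exists_circuit_of_eq_sum (hB.insert_erase_of_eq hjB (hnotB i) hj) (e := Fin.natAdd m i₀)
      (by simp [hi₀i, hnotB])
      (by rw [sum_insert_erase_of_eq hjB (hnotB i) hj, hsumB, hi₀])
      (mem_insert_of_mem (mem_insert_self _ _))
  refine ⟨C, hrC, ?_, hcirc⟩
  rw [hcard, card_insert_of_notMem fun h => hnotB i (mem_of_mem_erase h), card_erase_add_one hjB]

/-- Let G be an n×m matrix over F_q with n = m + s, s ≥ 1, constructed so that
the first m rows are linearly independent and each additional row equals
either one of the first m rows or the sum of the first m rows. If at least one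
additional row equals the sum of the first m rows, then every row index
belongs to at least one (m+1)-element circuit of G (a minimal dependent set of
rows of size m+1). -/
theorem stmt_15 (F : Type*) [Field F] [Fintype F] (m s : ℕ) (hs : 1 ≤ s)
    (G : Matrix (Fin (m + s)) (Fin m) F)
    (hindep : LinearIndependent F (fun i : Fin m => G (Fin.castAdd s i)))
    (hextra : ∀ i : Fin s,
      (∃ j : Fin m, G (Fin.natAdd m i) = G (Fin.castAdd s j)) ∨
      G (Fin.natAdd m i) = ∑ j : Fin m, G (Fin.castAdd s j))
    (hsum : ∃ i : Fin s,
      G (Fin.natAdd m i) = ∑ j : Fin m, G (Fin.castAdd s j)) :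
    ∀ r : Fin (m + s), ∃ C : Finset (Fin (m + s)),
      r ∈ C ∧ C.card = m + 1 ∧
      ¬ LinearIndependent F (fun i : C => G i) ∧
      ∀ C' : Finset (Fin (m + s)), C' ⊂ C →
        LinearIndependent F (fun i : C' => G i) :=
  stmt_15_general F m s G hindep hextra hsum
end
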